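/- Let T > 0 and E : ℝ → ℝ be continuous and T-periodic, and suppose there is a nonnegative continuous function D : ℝ → ℝ and a constant C ≥ 0 such that E(t) − E(s) + ∫ₛᵗ D(r) dr ≤ C(t − s)^{1/2} (∫ₛᵗ D(r) dr)^{1/2} + C for all s ≤ t. Then ∫₀ᵀ D(t) dt ≤ C² T + 2C + C√(C²T + 2C)·√T, i.e. the total dissipation over one period is bounded by a constant depending only on C and T. -/

import Mathlib

/-!
Periodicity cancels the energy terms over one period, so the total dissipation
`I = ∫₀ᵀ D` satisfies `I ≤ C √T √I + C`. This is a quadratic inequality in `√I`,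
which bounds `√I` by the positive root and hence bounds `I` in terms of `C` and `T`.
-/

open Real

lemma le_add_sqrt_of_sq_le_mul_add {a b x : ℝ} (ha : 0 ≤ a) (hb : 0 ≤ b)
    (h : x ^ 2 ≤ a * x + b) : x ≤ a + √b := by
  by_contra! hlt
  nlinarith [mul_nonneg ha (sqrt_nonneg b), sq_sqrt hb, sqrt_nonneg b]

lemma le_sq_add_mul_sqrt_add_of_le_mul_sqrt_add {a b x : ℝ} (ha : 0 ≤ a) (hb : 0 ≤ b)
    (h : x ≤ a * √x + b) : x ≤ a ^ 2 + a * √b + b := by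
  rcases le_or_gt x 0 with hx | hx
  · nlinarith [mul_nonneg ha (sqrt_nonneg b)]
  have hroot : √x ≤ a + √b :=
    le_add_sqrt_of_sq_le_mul_add ha hb (by rwa [sq_sqrt hx.le])
  calc x ≤ a * √x + b := h
    _ ≤ a * (a + √b) + b := by gcongr
    _ = a ^ 2 + a * √b + b := by ring

theorem diffusion_estimate_general (T C : ℝ) (hT : 0 < T) (hC : 0 ≤ C)
    (E D : ℝ → ℝ) (hper : Function.Periodic E T)
    (h : ∀ s t : ℝ, s ≤ t →
      E t - E s + (∫ r in s..t, D r) ≤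
        C * Real.sqrt (t - s) * Real.sqrt (∫ r in s..t, D r) + C) :
    (∫ t in (0:ℝ)..T, D t) ≤
      C ^ 2 * T + 2 * C + C * Real.sqrt (C ^ 2 * T + 2 * C) * Real.sqrt T := by
  set I := ∫ t in (0:ℝ)..T, D t
  have hET : E T = E 0 := by simpa using hper 0
  have hperiod : I ≤ C * √T * √I + C := by
    have h0 := h 0 T hT.le
    rw [hET, sub_zero] at h0
    linarith
  have hsqT : (C * √T) ^ 2 = C ^ 2 * T := by rw [mul_pow, sq_sqrt hT.le]
  have hsqrtC : √C ≤ √(C ^ 2 * T + 2 * C) := sqrt_le_sqrt (by nlinarith [sq_nonneg C])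
  calc I ≤ (C * √T) ^ 2 + C * √T * √C + C :=
        le_sq_add_mul_sqrt_add_of_le_mul_sqrt_add (by positivity) hC hperiod
    _ ≤ C ^ 2 * T + 2 * C + C * √(C ^ 2 * T + 2 * C) * √T := by
        rw [hsqT]
        nlinarith [mul_le_mul_of_nonneg_left hsqrtC (by positivity : 0 ≤ C * √T)]

/-- Abstract diffusion estimate: for a `T`-periodic energy with dissipation `D`
controlled as in the energy inequality, the total dissipation over one period is
bounded by a constant depending only on `C` and `T`. -/
theorem diffusion_estimate (T C : ℝ) (hT : 0 < T) (hC : 0 ≤ C)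
    (E D : ℝ → ℝ) (hE : Continuous E) (hper : Function.Periodic E T)
    (hD : Continuous D) (hDpos : ∀ t, 0 ≤ D t)
    (h : ∀ s t : ℝ, s ≤ t →
      E t - E s + (∫ r in s..t, D r) ≤
        C * Real.sqrt (t - s) * Real.sqrt (∫ r in s..t, D r) + C) :
    (∫ t in (0:ℝ)..T, D t) ≤
      C ^ 2 * T + 2 * C + C * Real.sqrt (C ^ 2 * T + 2 * C) * Real.sqrt T :=
  diffusion_estimate_general T C hT hC E D hper h
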